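/- arXiv:2205.10659 — 2 statements merged into one kernel-verified Lean document; each statement's English description precedes it below -/
import Mathlib

section
/- For every point (x,y) ∈ ℝ² with x ≠ 0 and y ≠ 0, there exists a unique λ with b < λ < a such that x²/(a−λ) + y²/(b−λ) = 1. That is, through every point of the plane not lying on the coordinate axes there passes exactly one hyperbola of the confocal family (Jacobi–Chasles, hyperbolic part). -/
/-!
On the interval `b < λ < a` the left-hand side `x²/(a−λ) + y²/(b−λ)` is strictly increasing in `λ`,
which gives uniqueness. Clearing denominators, the equation becomes the vanishing of the quadratic
`x²(b−λ) + y²(a−λ) − (a−λ)(b−λ)`, which equals `y²(a−b) > 0` at `λ = b` and `x²(b−a) < 0` at `λ = a`;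
the intermediate value theorem gives a root strictly between them.
-/

open Set

theorem strictMonoOn_confocal {a b x : ℝ} (y : ℝ) (hx : x ≠ 0) :
    StrictMonoOn (fun l : ℝ => x ^ 2 / (a - l) + y ^ 2 / (b - l)) (Ioo b a) := by
  intro l hl m hm hlm
  have hx_term : x ^ 2 / (a - l) < x ^ 2 / (a - m) :=
    div_lt_div_of_pos_left (by positivity) (by linarith [hm.2]) (by linarith)
  have hy_term : y ^ 2 / (b - l) ≤ y ^ 2 / (b - m) := by
    rw [← neg_sub l b, ← neg_sub m b, div_neg, div_neg, neg_le_neg_iff]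
    exact div_le_div_of_nonneg_left (sq_nonneg y) (by linarith [hl.1]) (by linarith)
  exact add_lt_add_of_lt_of_le hx_term hy_term

theorem confocal_eq_one_iff {a b x y l : ℝ} (hl : l ∈ Ioo b a) :
    x ^ 2 / (a - l) + y ^ 2 / (b - l) = 1 ↔
      x ^ 2 * (b - l) + y ^ 2 * (a - l) = (a - l) * (b - l) := by
  have ha : a - l ≠ 0 := by linarith [hl.2]
  have hb : b - l ≠ 0 := by linarith [hl.1]
  rw [div_add_div _ _ ha hb, div_eq_one_iff_eq (mul_ne_zero ha hb), mul_comm (a - l) (y ^ 2)]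

theorem exists_confocal_root {a b x y : ℝ} (hba : b < a) (hx : x ≠ 0) (hy : y ≠ 0) :
    ∃ l ∈ Ioo b a, x ^ 2 * (b - l) + y ^ 2 * (a - l) = (a - l) * (b - l) := by
  set g : ℝ → ℝ := fun l => x ^ 2 * (b - l) + y ^ 2 * (a - l) - (a - l) * (b - l)
  have hg_cont : ContinuousOn g (Icc b a) := by fun_prop
  have hg_a : g a < 0 := by
    have : 0 < x ^ 2 * (a - b) := mul_pos (by positivity) (sub_pos.2 hba)
    simp only [g]; linarith
  have hg_b : 0 < g b := by
    have : 0 < y ^ 2 * (a - b) := mul_pos (by positivity) (sub_pos.2 hba)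
    simp only [g]; linarith
  obtain ⟨l, hl, hgl⟩ := intermediate_value_Ioo' hba.le hg_cont ⟨hg_a, hg_b⟩
  exact ⟨l, hl, sub_eq_zero.1 hgl⟩

theorem jacobi_chasles_hyperbola_general (a b : ℝ) (hba : b < a)
    (x y : ℝ) (hx : x ≠ 0) (hy : y ≠ 0) :
    ∃! lam : ℝ, (b < lam ∧ lam < a) ∧ x ^ 2 / (a - lam) + y ^ 2 / (b - lam) = 1 := by
  obtain ⟨l, hl, hroot⟩ := exists_confocal_root hba hx hy
  have hl_eq := (confocal_eq_one_iff hl).2 hroot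
  exact ⟨l, ⟨hl, hl_eq⟩, fun m ⟨hm, hm_eq⟩ =>
    (strictMonoOn_confocal y hx).injOn hm hl (hm_eq.trans hl_eq.symm)⟩

/-- Jacobi–Chasles (hyperbolic part): through every point of the plane not lying
on the coordinate axes there passes exactly one hyperbola of the confocal family
`x²/(a−λ) + y²/(b−λ) = 1`, i.e. exactly one parameter `λ` with `b < λ < a`. -/
theorem jacobi_chasles_hyperbola (a b : ℝ) (hb : 0 < b) (hba : b < a)
    (x y : ℝ) (hx : x ≠ 0) (hy : y ≠ 0) :
    ∃! lam : ℝ, (b < lam ∧ lam < a) ∧ x ^ 2 / (a - lam) + y ^ 2 / (b - lam) = 1 :=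
  jacobi_chasles_hyperbola_general a b hba x y hx hy
end

section
/- Let p = (p₁,p₂) ∈ ℝ², let v = (v₁,v₂) be a unit vector (v₁² + v₂² = 1), and set λ = ab·Λ(p,v). If b < λ < a, then p₁²/(a−λ) + p₂²/(b−λ) ≤ 1; that is, when the caustic is a hyperbola of the confocal family, every point of the trajectory lies in the closed region between the two branches of that hyperbola (the region of possible motion lies inside the caustic hyperbola). -/
/-!
With `λ = ab·Λ(p,v) = b v₁² + a v₂² − (p × v)²` and `v` a unit vector, clearing the
denominators `a − λ > 0` and `λ − b > 0` leaves the inequality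
`p₁² (λ − b) − p₂² (a − λ) ≤ (a − λ)(λ − b)`, whose defect is the perfect square
`(⟨p, v⟩ (p × v) + (a − b) v₁ v₂)²`.
-/

/-- The caustic integral `Λ(p,v) = v₁²/a + v₂²/b − (v₁p₂ − p₁v₂)²/(ab)`. -/
noncomputable def caustic (a b p₁ p₂ v₁ v₂ : ℝ) : ℝ :=
  v₁ ^ 2 / a + v₂ ^ 2 / b - (v₁ * p₂ - p₁ * v₂) ^ 2 / (a * b)

lemma mul_mul_caustic {a b : ℝ} (ha : a ≠ 0) (hb : b ≠ 0) (p₁ p₂ v₁ v₂ : ℝ) :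
    a * b * caustic a b p₁ p₂ v₁ v₂ = b * v₁ ^ 2 + a * v₂ ^ 2 - (v₁ * p₂ - p₁ * v₂) ^ 2 := by
  unfold caustic
  field_simp

lemma sub_mul_sub_sub_eq_sq {a b p₁ p₂ v₁ v₂ L : ℝ} (hv : v₁ ^ 2 + v₂ ^ 2 = 1)
    (hL : L = b * v₁ ^ 2 + a * v₂ ^ 2 - (v₁ * p₂ - p₁ * v₂) ^ 2) :
    (a - L) * (L - b) - (p₁ ^ 2 * (L - b) - p₂ ^ 2 * (a - L))
      = ((v₁ * p₁ + v₂ * p₂) * (v₁ * p₂ - p₁ * v₂) + (a - b) * v₁ * v₂) ^ 2 := by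
  subst hL
  linear_combination (-(a - b) * (p₂ ^ 2 * v₁ ^ 2 - p₁ ^ 2 * v₂ ^ 2)
      - (v₁ * p₂ - p₁ * v₂) ^ 2 * (p₁ ^ 2 + p₂ ^ 2)
      + a * ((b - a) * v₂ ^ 2 + (v₁ * p₂ - p₁ * v₂) ^ 2)
      + b * ((a - b) * v₁ ^ 2 + (v₁ * p₂ - p₁ * v₂) ^ 2)
      + a * b * (1 - (v₁ ^ 2 + v₂ ^ 2)) - b * p₁ ^ 2 - a * p₂ ^ 2) * hv

lemma div_add_div_le_one_of_hyperbolic {a b p₁ p₂ v₁ v₂ L : ℝ} (hv : v₁ ^ 2 + v₂ ^ 2 = 1)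
    (hL : L = b * v₁ ^ 2 + a * v₂ ^ 2 - (v₁ * p₂ - p₁ * v₂) ^ 2) (hbL : b < L) (hLa : L < a) :
    p₁ ^ 2 / (a - L) + p₂ ^ 2 / (b - L) ≤ 1 := by
  have hA : 0 < a - L := sub_pos.2 hLa
  have hB : 0 < L - b := sub_pos.2 hbL
  have hsum : p₁ ^ 2 / (a - L) + p₂ ^ 2 / (b - L)
      = (p₁ ^ 2 * (L - b) - p₂ ^ 2 * (a - L)) / ((a - L) * (L - b)) := by
    rw [← neg_sub L b, div_neg]
    field_simp
    ring
  rw [hsum, div_le_one (mul_pos hA hB), ← sub_nonneg, sub_mul_sub_sub_eq_sq hv hL]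
  positivity

theorem point_inside_hyperbolic_caustic_general (a b : ℝ)
    (p₁ p₂ v₁ v₂ : ℝ) (hv : v₁ ^ 2 + v₂ ^ 2 = 1)
    (hlb : b < a * b * caustic a b p₁ p₂ v₁ v₂)
    (hla : a * b * caustic a b p₁ p₂ v₁ v₂ < a) :
    p₁ ^ 2 / (a - a * b * caustic a b p₁ p₂ v₁ v₂)
      + p₂ ^ 2 / (b - a * b * caustic a b p₁ p₂ v₁ v₂) ≤ 1 := by
  have ha : a ≠ 0 := by rintro rfl; simp at hla
  have hb : b ≠ 0 := by rintro rfl; simp at hlb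
  rw [mul_mul_caustic ha hb] at hlb hla ⊢
  exact div_add_div_le_one_of_hyperbolic hv rfl hlb hla

/-- When the caustic is a hyperbola of the confocal family (`b < λ = ab·Λ(p,v) < a`),
every point of the trajectory lies in the closed region between the two branches of
that hyperbola. -/
theorem point_inside_hyperbolic_caustic (a b : ℝ) (hb : 0 < b) (hba : b < a)
    (p₁ p₂ v₁ v₂ : ℝ) (hv : v₁ ^ 2 + v₂ ^ 2 = 1)
    (hlb : b < a * b * caustic a b p₁ p₂ v₁ v₂)
    (hla : a * b * caustic a b p₁ p₂ v₁ v₂ < a) :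
    p₁ ^ 2 / (a - a * b * caustic a b p₁ p₂ v₁ v₂)
      + p₂ ^ 2 / (b - a * b * caustic a b p₁ p₂ v₁ v₂) ≤ 1 :=
  point_inside_hyperbolic_caustic_general a b p₁ p₂ v₁ v₂ hv hlb hla
end
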